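/- For every γ with ‖F‖_F/√ℓ < γ < σ_max(F), the constrained optimization identity −(1/2)·max{ ln det(ℓΠ) : Π ∈ ℝ^{ℓ×ℓ} positive definite, Tr Π = 1, Tr(ΛΠ) ≥ γ² } = min{ 𝒜(q) : q ∈ [0, σ_max(F)^{−2}), 𝒩(q) ≥ γ } holds, and the maximizing Π is proportional to S(q_γ) where q_γ is the unique point with 𝒩(q_γ) = γ. -/

import Mathlib

open MeasureTheory Real Matrix

/-- The largest singular value of `F`: the supremum of `‖F w‖` over unit vectors. -/
noncomputable def sigmaMax {s ℓ : ℕ} (F : Matrix (Fin s) (Fin ℓ) ℝ) : ℝ :=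
  sSup {x : ℝ | ∃ w : Fin ℓ → ℝ, (∑ i, (w i)^2) = 1 ∧ x = Real.sqrt (∑ j, (F.mulVec w j)^2)}

/-- `S(q) = (I − qΛ)⁻¹` with `Λ = FᵀF`. -/
noncomputable def Sq {s ℓ : ℕ} (F : Matrix (Fin s) (Fin ℓ) ℝ) (q : ℝ) :
    Matrix (Fin ℓ) (Fin ℓ) ℝ :=
  (1 - q • (Fᵀ * F))⁻¹

/-- `𝒜(q) = −(1/2)·ln det(ℓ·S(q)/Tr S(q))`. -/
noncomputable def Afun {s ℓ : ℕ} (F : Matrix (Fin s) (Fin ℓ) ℝ) (q : ℝ) : ℝ :=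
  -(1 / 2) * Real.log ((((ℓ : ℝ) / (Sq F q).trace) • Sq F q).det)

/-- `𝒩(q) = sqrt(Tr(Λ·S(q))/Tr S(q))`. -/
noncomputable def Nfun {s ℓ : ℕ} (F : Matrix (Fin s) (Fin ℓ) ℝ) (q : ℝ) : ℝ :=
  Real.sqrt ((Fᵀ * F * Sq F q).trace / (Sq F q).trace)

/-- `𝔄(q,γ) = (1/2)·ln det(I − qΛ) − (ℓ/2)·ln(1 − qγ²)`. -/
noncomputable def AAfun {s ℓ : ℕ} (F : Matrix (Fin s) (Fin ℓ) ℝ) (q γ : ℝ) : ℝ :=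
  (1 / 2) * Real.log (1 - q • (Fᵀ * F)).det - ((ℓ : ℝ) / 2) * Real.log (1 - q * γ^2)

/-- Frobenius norm of a matrix. -/
noncomputable def frobNorm {s ℓ : ℕ} (F : Matrix (Fin s) (Fin ℓ) ℝ) : ℝ :=
  Real.sqrt ((Fᵀ * F).trace)

/-!
For `Π_q = S(q) / Tr S(q)` one has `Π_q⁻¹ = Tr S(q) · (I - qΛ)`, so every `Π` with `Tr Π = 1` and
`Tr(ΛΠ) ≥ Tr(ΛΠ_q)` satisfies, as `q ≥ 0`, `Tr(Π_q⁻¹ Π) ≤ ℓ = Tr(Π_q⁻¹ Π_q)`; applying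
`log x ≤ x - 1` to the eigenvalues of `Π_q^{-1/2} Π Π_q^{-1/2}` then gives `det Π ≤ det Π_q`.

In the eigenbasis of `Λ`, `Tr(ΛΠ_q) = 𝒩(q)²` is the mean of the eigenvalues `λᵢ` under the weights
`(1 - qλᵢ)⁻¹`. These weights tilt towards the large eigenvalues as `q` grows, so when `Λ` is not
scalar this mean increases strictly from the plain mean `‖F‖_F² / ℓ` at `q = 0` to `σ_max(F)²` as
`q → σ_max(F)⁻²`, and `𝒩(q) = γ` has exactly one solution `q_γ`. Finally
`𝒜(q) = -½ log det(ℓ Π_q)` and `Π_q` is admissible whenever `𝒩(q) ≥ γ`, so the minimum over `q`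
is attained at `q_γ` and equals the maximum over `Π`.
-/

open Finset Filter Topology Set Unitary

lemma two_mul_sum_mul_sum_sub_eq {ι : Type*} [Fintype ι] (x u v : ι → ℝ) :
    2 * ((∑ i, x i * u i) * ∑ i, v i - (∑ i, x i * v i) * ∑ i, u i) =
      ∑ i, ∑ j, (x i - x j) * (u i * v j - v i * u j) := by
  set f : ι → ι → ℝ := fun i j => x i * (u i * v j - v i * u j)
  have hf : ∀ i j, (x i - x j) * (u i * v j - v i * u j) = f i j + f j i := fun i j => by ring
  have hsum : ∑ i, ∑ j, f i j = (∑ i, x i * u i) * ∑ i, v i - (∑ i, x i * v i) * ∑ i, u i := by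
    simp only [f, sum_mul_sum, ← sum_sub_distrib]
    exact sum_congr rfl fun i _ => sum_congr rfl fun j _ => by ring
  simp only [hf, sum_add_distrib]
  rw [sum_comm (f := fun i j => f j i), hsum]
  ring

lemma inv_mul_inv_sub_inv_mul_inv {A B C D : ℝ} (hA : A ≠ 0) (hB : B ≠ 0) (hC : C ≠ 0)
    (hD : D ≠ 0) : B⁻¹ * C⁻¹ - A⁻¹ * D⁻¹ = (A * D - B * C) * (A⁻¹ * C⁻¹ * B⁻¹ * D⁻¹) := by
  field_simp

noncomputable def tiltedMean {ι : Type*} [Fintype ι] (μ : ι → ℝ) (q : ℝ) : ℝ :=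
  (∑ i, μ i * (1 - q * μ i)⁻¹) / ∑ i, (1 - q * μ i)⁻¹

lemma tiltedMean_zero {ι : Type*} [Fintype ι] (μ : ι → ℝ) :
    tiltedMean μ 0 = (∑ i, μ i) / Fintype.card ι := by
  simp [tiltedMean]

namespace tiltedMean

variable {ι : Type*} {μ : ι → ℝ} {i₀ : ι}

lemma one_sub_mul_pos (hmax : ∀ i, μ i ≤ μ i₀) {q : ℝ} (hq : q ∈ Ico 0 (μ i₀)⁻¹) (i : ι) :
    0 < 1 - q * μ i := by
  have hM : 0 < μ i₀ := inv_pos.1 (hq.1.trans_lt hq.2)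
  have : q * μ i₀ < 1 := by simpa [hM.ne'] using mul_lt_mul_of_pos_right hq.2 hM
  nlinarith [hq.1, hmax i]

variable [Fintype ι]

lemma sum_inv_one_sub_mul_pos (hmax : ∀ i, μ i ≤ μ i₀) {q : ℝ} (hq : q ∈ Ico 0 (μ i₀)⁻¹) :
    0 < ∑ i, (1 - q * μ i)⁻¹ :=
  sum_pos (fun i _ => inv_pos.2 (one_sub_mul_pos hmax hq i)) ⟨i₀, mem_univ _⟩

lemma nonneg (hμ : ∀ i, 0 ≤ μ i) (hmax : ∀ i, μ i ≤ μ i₀) {q : ℝ} (hq : q ∈ Ico 0 (μ i₀)⁻¹) :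
    0 ≤ tiltedMean μ q :=
  div_nonneg (sum_nonneg fun i _ => mul_nonneg (hμ i) (inv_pos.2 (one_sub_mul_pos hmax hq i)).le)
    (sum_inv_one_sub_mul_pos hmax hq).le

lemma strictMonoOn (hmax : ∀ i, μ i ≤ μ i₀) (hne : ∃ i j, μ i ≠ μ j) :
    StrictMonoOn (tiltedMean μ) (Ico 0 (μ i₀)⁻¹) := by
  intro a ha b hb hab
  set wa : ι → ℝ := fun i => (1 - a * μ i)⁻¹
  set wb : ι → ℝ := fun i => (1 - b * μ i)⁻¹
  have hw : ∀ i j, 0 < wa i * wa j * wb i * wb j := fun i j => by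
    have := one_sub_mul_pos hmax ha i; have := one_sub_mul_pos hmax ha j
    have := one_sub_mul_pos hmax hb i; have := one_sub_mul_pos hmax hb j
    positivity
  have hterm : ∀ i j, (μ i - μ j) * (wb i * wa j - wa i * wb j) =
      (b - a) * (μ i - μ j) ^ 2 * (wa i * wa j * wb i * wb j) := fun i j => by
    simp only [wa, wb]
    rw [inv_mul_inv_sub_inv_mul_inv (one_sub_mul_pos hmax ha i).ne'
      (one_sub_mul_pos hmax hb i).ne' (one_sub_mul_pos hmax ha j).ne'
      (one_sub_mul_pos hmax hb j).ne']
    ring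
  have hnonneg : ∀ i j, 0 ≤ (μ i - μ j) * (wb i * wa j - wa i * wb j) := fun i j => by
    rw [hterm]
    exact mul_nonneg (mul_nonneg (sub_pos.2 hab).le (sq_nonneg _)) (hw i j).le
  obtain ⟨i₁, j₁, h₁⟩ := hne
  have hpos : 0 < (μ i₁ - μ j₁) * (wb i₁ * wa j₁ - wa i₁ * wb j₁) := by
    rw [hterm]
    exact mul_pos (mul_pos (sub_pos.2 hab) (sq_pos_of_ne_zero (sub_ne_zero.2 h₁))) (hw i₁ j₁)
  have hcross : 0 < 2 * ((∑ i, μ i * wb i) * ∑ i, wa i - (∑ i, μ i * wa i) * ∑ i, wb i) := by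
    rw [two_mul_sum_mul_sum_sub_eq]
    calc 0 < (μ i₁ - μ j₁) * (wb i₁ * wa j₁ - wa i₁ * wb j₁) := hpos
      _ ≤ ∑ j, (μ i₁ - μ j) * (wb i₁ * wa j - wa i₁ * wb j) :=
        single_le_sum (fun j _ => hnonneg i₁ j) (mem_univ j₁)
      _ ≤ _ := single_le_sum (fun i _ => sum_nonneg fun j _ => hnonneg i j) (mem_univ i₁)
  rw [tiltedMean, tiltedMean, div_lt_div_iff₀ (sum_inv_one_sub_mul_pos hmax ha)
    (sum_inv_one_sub_mul_pos hmax hb)]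
  linarith

lemma continuousOn (hmax : ∀ i, μ i ≤ μ i₀) : ContinuousOn (tiltedMean μ) (Ico 0 (μ i₀)⁻¹) := by
  have hne : ∀ q ∈ Ico 0 (μ i₀)⁻¹, ∀ i, 1 - q * μ i ≠ 0 :=
    fun q hq i => (one_sub_mul_pos hmax hq i).ne'
  refine ContinuousOn.div ?_ ?_ fun q hq => (sum_inv_one_sub_mul_pos hmax hq).ne'
  all_goals
    refine continuousOn_finsetSum _ fun i _ => ?_
    have hi : ∀ q ∈ Ico 0 (μ i₀)⁻¹, 1 - q * μ i ≠ 0 := fun q hq => hne q hq i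
    fun_prop (disch := assumption)

lemma max_sub_le (hμ : ∀ i, 0 ≤ μ i) (hmax : ∀ i, μ i ≤ μ i₀) {q : ℝ} (hq : q ∈ Ico 0 (μ i₀)⁻¹) :
    μ i₀ - tiltedMean μ q ≤ Fintype.card ι * μ i₀ * (1 - q * μ i₀) := by
  have hw : ∀ i, 0 < 1 - q * μ i := one_sub_mul_pos hmax hq
  have hD := sum_inv_one_sub_mul_pos hmax hq
  have hN : ∑ i, (μ i₀ - μ i) * (1 - q * μ i)⁻¹ ≤ Fintype.card ι * μ i₀ := by
    rw [← nsmul_eq_mul]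
    refine sum_le_card_nsmul _ _ _ fun i _ => ?_
    rw [← div_eq_mul_inv, div_le_iff₀ (hw i)]
    nlinarith [hw i₀, hμ i, hq.1]
  have hsub : μ i₀ - tiltedMean μ q =
      (∑ i, (μ i₀ - μ i) * (1 - q * μ i)⁻¹) / ∑ i, (1 - q * μ i)⁻¹ := by
    rw [tiltedMean, eq_div_iff hD.ne', sub_mul, div_mul_cancel₀ _ hD.ne', mul_sum,
      ← sum_sub_distrib]
    exact sum_congr rfl fun i _ => by ring
  have hM : 0 ≤ (Fintype.card ι : ℝ) * μ i₀ := mul_nonneg (Nat.cast_nonneg _) (hμ i₀)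
  -- the total weight is at least the weight `(1 - q μ i₀)⁻¹` of `i₀`
  calc μ i₀ - tiltedMean μ q ≤ Fintype.card ι * μ i₀ / ∑ i, (1 - q * μ i)⁻¹ := by
        rw [hsub]; gcongr
    _ ≤ Fintype.card ι * μ i₀ / (1 - q * μ i₀)⁻¹ :=
        div_le_div_of_nonneg_left hM (inv_pos.2 (hw i₀))
          (single_le_sum (fun i _ => (inv_pos.2 (hw i)).le) (mem_univ i₀))
    _ = Fintype.card ι * μ i₀ * (1 - q * μ i₀) := by rw [div_inv_eq_mul]

lemma exists_eq (hμ : ∀ i, 0 ≤ μ i) (hmax : ∀ i, μ i ≤ μ i₀) {t : ℝ}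
    (h₀ : (∑ i, μ i) / Fintype.card ι < t) (h₁ : t < μ i₀) :
    ∃ q ∈ Ioo 0 (μ i₀)⁻¹, tiltedMean μ q = t := by
  have hM : 0 < μ i₀ := by
    have : 0 ≤ (∑ i, μ i) / Fintype.card ι :=
      div_nonneg (Finset.sum_nonneg fun i _ => hμ i) (Nat.cast_nonneg _)
    linarith
  have hlim : Tendsto (fun q => Fintype.card ι * μ i₀ * (1 - q * μ i₀)) (𝓝[<] (μ i₀)⁻¹)
      (𝓝 0) := by
    have : Continuous fun q => Fintype.card ι * μ i₀ * (1 - q * μ i₀) := by fun_prop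
    have := (this.tendsto (μ i₀)⁻¹).mono_left (nhdsWithin_le_nhds (s := Iio (μ i₀)⁻¹))
    rwa [inv_mul_cancel₀ hM.ne', sub_self, mul_zero] at this
  obtain ⟨b, hbt, hb⟩ := ((hlim.eventually (gt_mem_nhds (sub_pos.2 h₁))).and
    (Ioo_mem_nhdsLT (inv_pos.2 hM))).exists
  have hgb : t < tiltedMean μ b := by linarith [max_sub_le hμ hmax (Ioo_subset_Ico_self hb)]
  obtain ⟨q, hq, hgq⟩ := intermediate_value_Icc hb.1.le
    ((continuousOn hmax).mono (Icc_subset_Ico_right hb.2)) ⟨tiltedMean_zero μ ▸ h₀.le, hgb.le⟩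
  refine ⟨q, ⟨hq.1.lt_of_ne ?_, hq.2.trans_lt hb.2⟩, hgq⟩
  rintro rfl
  rw [tiltedMean_zero] at hgq
  linarith

end tiltedMean

namespace Matrix

variable {n : Type*}

lemma isHermitian_transpose_mul_self {m : Type*} [Fintype m] (F : Matrix m n ℝ) :
    (Fᵀ * F).IsHermitian := by
  simpa using isHermitian_conjTranspose_mul_self F

variable [Fintype n]

lemma posSemidef_transpose_mul_self {m : Type*} [Fintype m] (F : Matrix m n ℝ) :
    (Fᵀ * F).PosSemidef := by
  simpa using posSemidef_conjTranspose_mul_self F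

noncomputable def normalizeTrace (S : Matrix n n ℝ) : Matrix n n ℝ := S.trace⁻¹ • S

lemma trace_normalizeTrace {S : Matrix n n ℝ} (h : S.trace ≠ 0) : S.normalizeTrace.trace = 1 := by
  rw [normalizeTrace, trace_smul, smul_eq_mul, inv_mul_cancel₀ h]

lemma PosDef.normalizeTrace [Nonempty n] {S : Matrix n n ℝ} (hS : S.PosDef) :
    S.normalizeTrace.PosDef :=
  hS.smul (inv_pos.2 hS.trace_pos)

variable [DecidableEq n]

theorem PosDef.det_le_one_of_trace_le {C : Matrix n n ℝ} (hC : C.PosDef)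
    (h : C.trace ≤ Fintype.card n) : C.det ≤ 1 := by
  have hμ := hC.eigenvalues_pos
  have hlog : Real.log C.det ≤ 0 := by
    rw [hC.1.det_eq_prod_eigenvalues]
    simp only [RCLike.ofReal_real_eq_id, id_eq]
    rw [Real.log_prod fun i _ => (hμ i).ne']
    calc ∑ i, Real.log (hC.1.eigenvalues i) ≤ ∑ i, (hC.1.eigenvalues i - 1) :=
          sum_le_sum fun i _ => Real.log_le_sub_one_of_pos (hμ i)
      _ = C.trace - Fintype.card n := by
          simp [sum_sub_distrib, hC.1.trace_eq_sum_eigenvalues]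
      _ ≤ 0 := sub_nonpos.2 h
  exact (Real.log_nonpos_iff hC.det_pos.le).1 hlog

open scoped MatrixOrder in
theorem PosDef.det_le_of_trace_inv_mul_le {A B : Matrix n n ℝ} (hA : A.PosDef) (hB : B.PosDef)
    (h : (A⁻¹ * B).trace ≤ Fintype.card n) : B.det ≤ A.det := by
  set R := CFC.sqrt A⁻¹
  have hRR : R * R = A⁻¹ := CFC.sqrt_mul_sqrt_self _ hA.inv.posSemidef.nonneg
  have hRH : Rᴴ = R := (CFC.sqrt_nonneg A⁻¹).isSelfAdjoint.star_eq
  have hdetR : R.det * R.det = A.det⁻¹ := by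
    rw [← det_mul, hRR, det_nonsing_inv, Ring.inverse_eq_inv']
  have hC : (R * B * Rᴴ).PosDef := by
    refine hB.mul_mul_conjTranspose_same (vecMul_injective_iff_isUnit.2 ?_)
    rw [isUnit_iff_isUnit_det, isUnit_iff_ne_zero]
    intro h0
    rw [h0, zero_mul] at hdetR
    exact inv_ne_zero hA.det_pos.ne' hdetR.symm
  have h1 := hC.det_le_one_of_trace_le (by rwa [hRH, trace_mul_cycle, hRR])
  rwa [hRH, det_mul, det_mul, mul_right_comm, hdetR, inv_mul_le_iff₀ hA.det_pos, mul_one] at h1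

theorem det_le_det_normalizeTrace_inv_one_sub_smul {A P : Matrix n n ℝ} {q : ℝ} (hq : 0 ≤ q)
    (hX : (1 - q • A).PosDef) (hP : P.PosDef) (hPtr : P.trace = 1)
    (hAP : (A * (1 - q • A)⁻¹.normalizeTrace).trace ≤ (A * P).trace) :
    P.det ≤ (1 - q • A)⁻¹.normalizeTrace.det := by
  have : Nonempty n := not_isEmpty_iff.1 fun _ => by simp at hPtr
  set S := (1 - q • A)⁻¹
  have hT : 0 < S.trace := hX.inv.trace_pos
  have hinv : S.normalizeTrace⁻¹ = S.trace • (1 - q • A) := by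
    refine inv_eq_left_inv ?_
    rw [normalizeTrace, smul_mul_smul_comm, mul_inv_cancel₀ hT.ne', one_smul,
      mul_nonsing_inv _ ((isUnit_iff_isUnit_det _).1 hX.isUnit)]
  have htr : ∀ X : Matrix n n ℝ,
      (S.normalizeTrace⁻¹ * X).trace = S.trace * (X.trace - q * (A * X).trace) := by
    intro X
    rw [hinv, smul_mul, sub_mul, one_mul, smul_mul, trace_smul, trace_sub, trace_smul,
      smul_eq_mul, smul_eq_mul]
  have hS := hX.inv.normalizeTrace
  refine hS.det_le_of_trace_inv_mul_le hP ?_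
  calc (S.normalizeTrace⁻¹ * P).trace = S.trace * (1 - q * (A * P).trace) := by rw [htr, hPtr]
    _ ≤ S.trace * (S.normalizeTrace.trace - q * (A * S.normalizeTrace).trace) := by
      rw [trace_normalizeTrace hT.ne']
      gcongr
    _ = Fintype.card n := by
      rw [← htr, nonsing_inv_mul _ ((isUnit_iff_isUnit_det _).1 hS.isUnit), trace_one]

theorem isGreatest_log_det_smul_normalizeTrace [Nonempty n] {A : Matrix n n ℝ} {q c : ℝ}
    (hq : 0 ≤ q) (hX : (1 - q • A).PosDef) (hc : 0 < c) :
    IsGreatest {x | ∃ P : Matrix n n ℝ, P.PosDef ∧ P.trace = 1 ∧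
        (A * (1 - q • A)⁻¹.normalizeTrace).trace ≤ (A * P).trace ∧ x = Real.log (c • P).det}
      (Real.log (c • (1 - q • A)⁻¹.normalizeTrace).det) := by
  have hS := hX.inv.normalizeTrace
  refine ⟨⟨_, hS, trace_normalizeTrace hX.inv.trace_pos.ne', le_rfl, rfl⟩, ?_⟩
  rintro _ ⟨P, hP, hPtr, hAP, rfl⟩
  rw [det_smul, det_smul]
  have hcn : 0 < c ^ Fintype.card n := pow_pos hc _
  exact Real.log_le_log (mul_pos hcn hP.det_pos) <| mul_le_mul_of_nonneg_left
    (det_le_det_normalizeTrace_inv_one_sub_smul hq hX hP hPtr hAP) hcn.le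

lemma inv_conjStarAlgAut (u : unitary (Matrix n n ℝ)) (X : Matrix n n ℝ) :
    (conjStarAlgAut ℝ _ u X)⁻¹ = conjStarAlgAut ℝ _ u X⁻¹ := by
  have hu : (u : Matrix n n ℝ)⁻¹ = star (u : Matrix n n ℝ) :=
    inv_eq_left_inv (coe_star_mul_self u)
  have hu' : (star u : Matrix n n ℝ)⁻¹ = u := inv_eq_left_inv (coe_mul_star_self u)
  simp only [conjStarAlgAut_apply, mul_inv_rev, hu, hu', Matrix.mul_assoc]

lemma trace_conjStarAlgAut (u : unitary (Matrix n n ℝ)) (X : Matrix n n ℝ) :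
    (conjStarAlgAut ℝ _ u X).trace = X.trace := by
  rw [conjStarAlgAut_apply, trace_mul_cycle, coe_star_mul_self, one_mul]

lemma dotProduct_mulVec_unitary (u : unitary (Matrix n n ℝ)) (v w : n → ℝ) :
    v ⬝ᵥ (u : Matrix n n ℝ) *ᵥ w = (star (u : Matrix n n ℝ) *ᵥ v) ⬝ᵥ w := by
  rw [dotProduct_mulVec, star_eq_conjTranspose, conjTranspose_eq_transpose_of_trivial,
    mulVec_transpose]

lemma dotProduct_self_star_mulVec (u : unitary (Matrix n n ℝ)) (w : n → ℝ) :
    (star (u : Matrix n n ℝ) *ᵥ w) ⬝ᵥ (star (u : Matrix n n ℝ) *ᵥ w) = w ⬝ᵥ w := by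
  rw [← dotProduct_mulVec_unitary, mulVec_mulVec, mul_star_self_of_mem u.2, one_mulVec]

namespace IsHermitian

variable {A : Matrix n n ℝ} (hA : A.IsHermitian)
include hA

lemma eq_conjStarAlgAut_diagonal :
    A = conjStarAlgAut ℝ _ hA.eigenvectorUnitary (diagonal hA.eigenvalues) := by
  simpa using hA.spectral_theorem

lemma eq_smul_one_of_eigenvalues_eq {c : ℝ} (h : ∀ i, hA.eigenvalues i = c) : A = c • 1 := by
  rw [hA.eq_conjStarAlgAut_diagonal, show hA.eigenvalues = fun _ => c from funext h,
    ← smul_one_eq_diagonal, map_smul, map_one]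

lemma one_sub_smul_eq (q : ℝ) :
    1 - q • A = conjStarAlgAut ℝ _ hA.eigenvectorUnitary
      (diagonal fun i => 1 - q * hA.eigenvalues i) := by
  conv_lhs => rw [hA.eq_conjStarAlgAut_diagonal]
  rw [← map_one (conjStarAlgAut ℝ _ hA.eigenvectorUnitary), ← map_smul, ← map_sub]
  congr 1
  ext i j
  by_cases h : i = j <;> simp [h]

lemma inv_one_sub_smul_eq {q : ℝ} (hq : ∀ i, q * hA.eigenvalues i ≠ 1) :
    (1 - q • A)⁻¹ = conjStarAlgAut ℝ _ hA.eigenvectorUnitary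
      (diagonal fun i => (1 - q * hA.eigenvalues i)⁻¹) := by
  rw [hA.one_sub_smul_eq, inv_conjStarAlgAut]
  congr 1
  refine inv_eq_left_inv ?_
  rw [diagonal_mul_diagonal, ← diagonal_one]
  congr 1
  funext i
  exact inv_mul_cancel₀ (sub_ne_zero.2 (hq i).symm)

lemma trace_inv_one_sub_smul {q : ℝ} (hq : ∀ i, q * hA.eigenvalues i ≠ 1) :
    (1 - q • A)⁻¹.trace = ∑ i, (1 - q * hA.eigenvalues i)⁻¹ := by
  rw [hA.inv_one_sub_smul_eq hq, trace_conjStarAlgAut, trace_diagonal]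

lemma trace_mul_inv_one_sub_smul {q : ℝ} (hq : ∀ i, q * hA.eigenvalues i ≠ 1) :
    (A * (1 - q • A)⁻¹).trace = ∑ i, hA.eigenvalues i * (1 - q * hA.eigenvalues i)⁻¹ := by
  rw [hA.inv_one_sub_smul_eq hq]
  nth_rw 1 [hA.eq_conjStarAlgAut_diagonal]
  rw [← map_mul, trace_conjStarAlgAut, diagonal_mul_diagonal, trace_diagonal]

lemma posDef_one_sub_smul {q : ℝ} (hq : ∀ i, q * hA.eigenvalues i < 1) :
    (1 - q • A).PosDef := by
  rw [hA.one_sub_smul_eq, conjStarAlgAut_apply, isUnit_coe.posDef_star_right_conjugate_iff,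
    posDef_diagonal_iff]
  exact fun i => sub_pos.2 (hq i)

lemma dotProduct_mulVec_self_eq_sum (w : n → ℝ) :
    w ⬝ᵥ A *ᵥ w =
      ∑ i, hA.eigenvalues i * (star (hA.eigenvectorUnitary : Matrix n n ℝ) *ᵥ w) i ^ 2 := by
  conv_lhs => rw [hA.eq_conjStarAlgAut_diagonal]
  rw [conjStarAlgAut_apply, ← mulVec_mulVec, ← mulVec_mulVec, dotProduct_mulVec_unitary,
    dotProduct, Finset.sum_congr rfl]
  intro i _
  rw [mulVec_diagonal]
  ring

lemma isGreatest_dotProduct_mulVec_self {i₀ : n}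
    (hmax : ∀ i, hA.eigenvalues i ≤ hA.eigenvalues i₀) :
    IsGreatest {x | ∃ w : n → ℝ, w ⬝ᵥ w = 1 ∧ x = w ⬝ᵥ A *ᵥ w} (hA.eigenvalues i₀) := by
  set U := (hA.eigenvectorUnitary : Matrix n n ℝ)
  refine ⟨⟨U *ᵥ Pi.single i₀ 1, ?_, ?_⟩, ?_⟩
  · rw [← dotProduct_self_star_mulVec hA.eigenvectorUnitary, mulVec_mulVec, coe_star_mul_self,
      one_mulVec]
    simp
  · rw [hA.dotProduct_mulVec_self_eq_sum, mulVec_mulVec, coe_star_mul_self, one_mulVec,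
      Finset.sum_eq_single i₀] <;> simp +contextual
  · rintro _ ⟨w, hw, rfl⟩
    rw [hA.dotProduct_mulVec_self_eq_sum, ← mul_one (hA.eigenvalues i₀), ← hw,
      ← dotProduct_self_star_mulVec hA.eigenvectorUnitary, dotProduct, Finset.mul_sum]
    simp_rw [← sq]
    gcongr with i
    exact hmax i

end IsHermitian

end Matrix

noncomputable def gramEigenvalues {s ℓ : ℕ} (F : Matrix (Fin s) (Fin ℓ) ℝ) : Fin ℓ → ℝ :=
  (isHermitian_transpose_mul_self F).eigenvalues

section Gram

variable {s ℓ : ℕ} (F : Matrix (Fin s) (Fin ℓ) ℝ) {i₀ : Fin ℓ}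

lemma gramEigenvalues_nonneg (i : Fin ℓ) : 0 ≤ gramEigenvalues F i :=
  (posSemidef_transpose_mul_self F).eigenvalues_nonneg i

lemma exists_gramEigenvalues_ne (hΛ : ∀ c : ℝ, Fᵀ * F ≠ c • (1 : Matrix (Fin ℓ) (Fin ℓ) ℝ)) :
    ∃ i j, gramEigenvalues F i ≠ gramEigenvalues F j := by
  by_contra! h
  rcases isEmpty_or_nonempty (Fin ℓ) with hℓ | hℓ
  · exact hΛ 0 (Subsingleton.elim _ _)
  · obtain ⟨i⟩ := hℓ
    exact hΛ _ ((isHermitian_transpose_mul_self F).eq_smul_one_of_eigenvalues_eq fun j => h j i)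

lemma sum_mulVec_sq_eq (w : Fin ℓ → ℝ) : ∑ j, (F *ᵥ w) j ^ 2 = w ⬝ᵥ (Fᵀ * F) *ᵥ w := by
  rw [← mulVec_mulVec, dotProduct_mulVec, vecMul_transpose]
  simp [dotProduct, sq]

lemma sigmaMax_eq_sqrt (hmax : ∀ i, gramEigenvalues F i ≤ gramEigenvalues F i₀) :
    sigmaMax F = √(gramEigenvalues F i₀) := by
  have h := (isHermitian_transpose_mul_self F).isGreatest_dotProduct_mulVec_self hmax
  refine IsGreatest.csSup_eq ⟨?_, ?_⟩
  · obtain ⟨w, hw, hx⟩ := h.1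
    exact ⟨w, by simpa [dotProduct, sq] using hw, by rw [sum_mulVec_sq_eq, ← hx]; rfl⟩
  · rintro _ ⟨w, hw, rfl⟩
    rw [sum_mulVec_sq_eq]
    exact Real.sqrt_le_sqrt (h.2 ⟨w, by simpa [dotProduct, sq] using hw, rfl⟩)

lemma frobNorm_eq_sqrt_sum : frobNorm F = √(∑ i, gramEigenvalues F i) := by
  rw [frobNorm, (isHermitian_transpose_mul_self F).trace_eq_sum_eigenvalues]
  simp [gramEigenvalues]

lemma Nfun_eq_sqrt (q : ℝ) : Nfun F q = √((Fᵀ * F * (Sq F q).normalizeTrace).trace) := by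
  rw [Nfun, normalizeTrace, Matrix.mul_smul, trace_smul, smul_eq_mul, inv_mul_eq_div]

lemma Afun_eq (q : ℝ) :
    Afun F q = -(1 / 2) * Real.log (((ℓ : ℝ) • (Sq F q).normalizeTrace).det) := by
  rw [Afun, normalizeTrace, smul_smul, ← div_eq_mul_inv]

variable {F} {q : ℝ}

lemma posDef_one_sub_smul_gram (hmax : ∀ i, gramEigenvalues F i ≤ gramEigenvalues F i₀)
    (hq : q ∈ Ico 0 (gramEigenvalues F i₀)⁻¹) : (1 - q • (Fᵀ * F)).PosDef :=
  (isHermitian_transpose_mul_self F).posDef_one_sub_smul fun i =>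
    sub_pos.1 (tiltedMean.one_sub_mul_pos hmax hq i)

lemma trace_gram_mul_normalizeTrace_Sq (hmax : ∀ i, gramEigenvalues F i ≤ gramEigenvalues F i₀)
    (hq : q ∈ Ico 0 (gramEigenvalues F i₀)⁻¹) :
    (Fᵀ * F * (Sq F q).normalizeTrace).trace = tiltedMean (gramEigenvalues F) q := by
  have hne : ∀ i, q * gramEigenvalues F i ≠ 1 := fun i =>
    (sub_pos.1 (tiltedMean.one_sub_mul_pos hmax hq i)).ne
  have hH := isHermitian_transpose_mul_self F
  rw [normalizeTrace, Matrix.mul_smul, trace_smul, smul_eq_mul, Sq, hH.trace_inv_one_sub_smul hne,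
    hH.trace_mul_inv_one_sub_smul hne, tiltedMean, inv_mul_eq_div]
  rfl

lemma Nfun_sq (hmax : ∀ i, gramEigenvalues F i ≤ gramEigenvalues F i₀)
    (hq : q ∈ Ico 0 (gramEigenvalues F i₀)⁻¹) :
    Nfun F q ^ 2 = (Fᵀ * F * (Sq F q).normalizeTrace).trace := by
  rw [Nfun_eq_sqrt, Real.sq_sqrt]
  rw [trace_gram_mul_normalizeTrace_Sq hmax hq]
  exact tiltedMean.nonneg (gramEigenvalues_nonneg F) hmax hq

lemma strictMonoOn_Nfun (hΛ : ∀ c : ℝ, Fᵀ * F ≠ c • (1 : Matrix (Fin ℓ) (Fin ℓ) ℝ))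
    (hmax : ∀ i, gramEigenvalues F i ≤ gramEigenvalues F i₀) :
    StrictMonoOn (Nfun F) (Ico 0 (gramEigenvalues F i₀)⁻¹) := by
  intro a ha b hb hab
  rw [Nfun_eq_sqrt, Nfun_eq_sqrt, trace_gram_mul_normalizeTrace_Sq hmax ha,
    trace_gram_mul_normalizeTrace_Sq hmax hb]
  exact Real.sqrt_lt_sqrt (tiltedMean.nonneg (gramEigenvalues_nonneg F) hmax ha)
    (tiltedMean.strictMonoOn hmax (exists_gramEigenvalues_ne F hΛ) ha hb hab)

lemma exists_Nfun_eq (hmax : ∀ i, gramEigenvalues F i ≤ gramEigenvalues F i₀) {γ : ℝ}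
    (hγ₁ : frobNorm F / √ℓ < γ) (hγ₂ : γ < √(gramEigenvalues F i₀)) :
    ∃ q ∈ Ioo 0 (gramEigenvalues F i₀)⁻¹, Nfun F q = γ := by
  have hγ : 0 < γ := (div_nonneg (Real.sqrt_nonneg _) (Real.sqrt_nonneg _)).trans_lt hγ₁
  have h₀ : (∑ i, gramEigenvalues F i) / Fintype.card (Fin ℓ) < γ ^ 2 := by
    rw [Fintype.card_fin, ← Real.sqrt_lt' hγ, Real.sqrt_div' _ (Nat.cast_nonneg _),
      ← frobNorm_eq_sqrt_sum]
    exact hγ₁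
  obtain ⟨q, hq, hg⟩ := tiltedMean.exists_eq (gramEigenvalues_nonneg F) hmax h₀
    ((Real.lt_sqrt hγ.le).1 hγ₂)
  refine ⟨q, hq, ?_⟩
  rw [Nfun_eq_sqrt, trace_gram_mul_normalizeTrace_Sq hmax (Ioo_subset_Ico_self hq), hg,
    Real.sqrt_sq hγ.le]

lemma isGreatest_log_det_normalizeTrace_Sq
    (hmax : ∀ i, gramEigenvalues F i ≤ gramEigenvalues F i₀)
    (hq : q ∈ Ico 0 (gramEigenvalues F i₀)⁻¹) :
    IsGreatest {x | ∃ P : Matrix (Fin ℓ) (Fin ℓ) ℝ, P.PosDef ∧ P.trace = 1 ∧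
        (Fᵀ * F * (Sq F q).normalizeTrace).trace ≤ (Fᵀ * F * P).trace ∧
        x = Real.log (((ℓ : ℝ) • P).det)}
      (Real.log (((ℓ : ℝ) • (Sq F q).normalizeTrace).det)) :=
  have : Nonempty (Fin ℓ) := ⟨i₀⟩
  isGreatest_log_det_smul_normalizeTrace hq.1 (posDef_one_sub_smul_gram hmax hq)
    (Nat.cast_pos.2 i₀.pos)

lemma isLeast_Afun (hmax : ∀ i, gramEigenvalues F i ≤ gramEigenvalues F i₀) {q₀ : ℝ}
    (hq₀ : q₀ ∈ Ico 0 (gramEigenvalues F i₀)⁻¹) :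
    IsLeast {x | ∃ q ∈ Ico 0 (gramEigenvalues F i₀)⁻¹, Nfun F q₀ ≤ Nfun F q ∧ x = Afun F q}
      (Afun F q₀) := by
  have : Nonempty (Fin ℓ) := ⟨i₀⟩
  refine ⟨⟨q₀, hq₀, le_rfl, rfl⟩, ?_⟩
  rintro _ ⟨q, hq, hle, rfl⟩
  have hmom : (Fᵀ * F * (Sq F q₀).normalizeTrace).trace ≤
      (Fᵀ * F * (Sq F q).normalizeTrace).trace := by
    rw [← Nfun_sq hmax hq₀, ← Nfun_sq hmax hq]
    exact pow_le_pow_left₀ (by rw [Nfun]; positivity) hle 2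
  have := (isGreatest_log_det_normalizeTrace_Sq hmax hq₀).2
    ⟨(Sq F q).normalizeTrace, (posDef_one_sub_smul_gram hmax hq).inv.normalizeTrace,
      trace_normalizeTrace (posDef_one_sub_smul_gram hmax hq).inv.trace_pos.ne', hmom, rfl⟩
  rw [Afun_eq, Afun_eq]
  linarith

end Gram

/-- Constrained optimization identity: for `‖F‖_F/√ℓ < γ < σ_max(F)`,
`−(1/2)·max{ln det(ℓPi) : Pi ≻ 0, Tr Pi = 1, Tr(ΛPi) ≥ γ²}
  = min{𝒜(q) : q ∈ [0, σ_max(F)^{−2}), 𝒩(q) ≥ γ}`,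
both extrema being attained, with the maximizing `Pi` proportional to `S(q_γ)`,
where `q_γ` is the unique point with `𝒩(q_γ) = γ`. -/
theorem constrained_optimization_identity
    (s ℓ : ℕ) (F : Matrix (Fin s) (Fin ℓ) ℝ)
    (hΛ : ∀ c : ℝ, Fᵀ * F ≠ c • (1 : Matrix (Fin ℓ) (Fin ℓ) ℝ))
    (γ : ℝ) (hγ₁ : frobNorm F / Real.sqrt ℓ < γ) (hγ₂ : γ < sigmaMax F) :
    ∃ qγ ∈ Set.Ioo (0 : ℝ) ((sigmaMax F ^ 2)⁻¹),
      Nfun F qγ = γ ∧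
      (∀ q' ∈ Set.Ioo (0 : ℝ) ((sigmaMax F ^ 2)⁻¹), Nfun F q' = γ → q' = qγ) ∧
      IsGreatest
        {x : ℝ | ∃ Pi : Matrix (Fin ℓ) (Fin ℓ) ℝ, Pi.PosDef ∧ Pi.trace = 1 ∧
          γ^2 ≤ (Fᵀ * F * Pi).trace ∧ x = Real.log (((ℓ : ℝ) • Pi).det)}
        (Real.log (((ℓ : ℝ) • (((Sq F qγ).trace)⁻¹ • Sq F qγ)).det)) ∧
      IsLeast
        {x : ℝ | ∃ q ∈ Set.Ico (0 : ℝ) ((sigmaMax F ^ 2)⁻¹), γ ≤ Nfun F q ∧ x = Afun F q}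
        (-(1 / 2) * Real.log (((ℓ : ℝ) • (((Sq F qγ).trace)⁻¹ • Sq F qγ)).det)) := by
  obtain ⟨i₁, -, -⟩ := exists_gramEigenvalues_ne F hΛ
  obtain ⟨i₀, -, hmax⟩ := univ.exists_max_image (gramEigenvalues F) ⟨i₁, mem_univ _⟩
  replace hmax : ∀ i, gramEigenvalues F i ≤ gramEigenvalues F i₀ := fun i => hmax i (mem_univ i)
  rw [sigmaMax_eq_sqrt F hmax] at hγ₂ ⊢
  rw [Real.sq_sqrt (gramEigenvalues_nonneg F i₀)]
  obtain ⟨qγ, hqγ, hNγ⟩ := exists_Nfun_eq hmax hγ₁ hγ₂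
  have hqγ' := Ioo_subset_Ico_self hqγ
  refine ⟨qγ, hqγ, hNγ, fun q hq h => (strictMonoOn_Nfun hΛ hmax).injOn
    (Ioo_subset_Ico_self hq) hqγ' (h.trans hNγ.symm), ?_, ?_⟩
  · rw [← hNγ, Nfun_sq hmax hqγ']
    exact isGreatest_log_det_normalizeTrace_Sq hmax hqγ'
  · have := isLeast_Afun hmax hqγ'
    rw [hNγ, Afun_eq] at this
    exact this
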